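/- Let q ≥ 2 and f : {0,…,q−1}² → {0,…,q−1}, and suppose that for every κ > 0 there exists a probability distribution p on {(i,j,f(i,j)) : i+j ≤ q−1} with all marginal masses p(xᵢ), p(yⱼ), p(z_k) at least 1/q − κ (as defined via sums of p over triples containing the given variable). Then the map j ↦ f(q−1−j, j) from {0,…,q−1} to {0,…,q−1} is surjective (equivalently, bijective). -/

import Mathlib

/-!
Give each cell `(i, j)` the slack `q - 1 - i - j`, which is nonnegative on the support of `p`.
If `k` is missed on the antidiagonal `i + j = q - 1`, every cell with `f i j = k` has slack at
least `1`, so `p(z_k)` is at most the expected slack `(q - 1) - ∑ i p(xᵢ) - ∑ j p(yⱼ)`. The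
marginal bounds make this at most `q (q - 1) κ`, which is below `1/q - κ` once `κ` is small.
-/

open Finset

theorem sum_sum_sub_sub_mul {α β : Type*} [Fintype α] [Fintype β]
    (p : α → β → ℝ) (c : ℝ) (a : α → ℝ) (b : β → ℝ) :
    ∑ i, ∑ j, (c - a i - b j) * p i j
      = c * ∑ i, ∑ j, p i j - ∑ i, a i * ∑ j, p i j - ∑ j, b j * ∑ i, p i j := by
  simp only [sub_mul, sum_sub_distrib, mul_sum]
  rw [sum_comm (f := fun j i => b j * p i j)]

theorem Fin.sum_val_cast_mul_two (q : ℕ) : (∑ i : Fin q, (i : ℝ)) * 2 = q * (q - 1) := by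
  rw [Fin.sum_univ_eq_sum_range (fun i => (i : ℝ)), ← Nat.cast_sum]
  induction q with
  | zero => simp
  | succ n ih => rw [sum_range_succ]; push_cast at ih ⊢; linarith

theorem Fin.mul_triangle_le_sum_val_mul {q : ℕ} {m : ℝ} {r : Fin q → ℝ} (hr : ∀ i, m ≤ r i) :
    m * (q * (q - 1) / 2) ≤ ∑ i : Fin q, (i : ℝ) * r i := by
  rw [← Fin.sum_val_cast_mul_two, mul_div_cancel_right₀ _ two_ne_zero, mul_sum]
  exact sum_le_sum fun i _ => by
    rw [mul_comm]; exact mul_le_mul_of_nonneg_left (hr i) i.val.cast_nonneg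

theorem ite_le_slack_mul {q i j : ℕ} {x : ℝ} {P : Prop} [Decidable P] (hx : 0 ≤ x)
    (hsupp : q ≤ i + j → x = 0) (hP : P → i + j ≠ q - 1) :
    (if P then x else 0) ≤ ((q : ℝ) - 1 - i - j) * x := by
  rcases eq_or_ne x 0 with rfl | hx0
  · simp
  have hij : i + j + 1 ≤ q := by by_contra; exact hx0 (hsupp (by omega))
  split_ifs with hp
  · have : (i : ℝ) + j + 2 ≤ q := by exact_mod_cast (show i + j + 2 ≤ q by have := hP hp; omega)
    nlinarith
  · have : (i : ℝ) + j + 1 ≤ q := by exact_mod_cast hij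
    nlinarith

section LowerTriangular

variable {q : ℕ} {f : Fin q → Fin q → Fin q} {k : Fin q} {p : Fin q → Fin q → ℝ}

theorem sum_sum_ite_le_of_forall_diag_ne (hpos : ∀ i j, 0 ≤ p i j)
    (hsupp : ∀ i j : Fin q, q ≤ (i : ℕ) + (j : ℕ) → p i j = 0)
    (hk : ∀ i j : Fin q, (i : ℕ) + j = q - 1 → f i j ≠ k) :
    ∑ i, ∑ j, (if f i j = k then p i j else 0)
      ≤ (q - 1) * ∑ i, ∑ j, p i j - ∑ i : Fin q, (i : ℝ) * ∑ j, p i j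
        - ∑ j : Fin q, (j : ℝ) * ∑ i, p i j :=
  (sum_le_sum fun i _ => sum_le_sum fun j _ =>
      ite_le_slack_mul (hpos i j) (hsupp i j) fun hf hij => hk i j hij hf).trans_eq
    (sum_sum_sub_sub_mul p _ _ _)

theorem one_le_cube_mul_of_forall_diag_ne {κ : ℝ} (hκ : 0 < κ) (hpos : ∀ i j, 0 ≤ p i j)
    (hsupp : ∀ i j : Fin q, q ≤ (i : ℕ) + (j : ℕ) → p i j = 0)
    (hsum : ∑ i, ∑ j, p i j = 1)
    (hrow : ∀ i : Fin q, 1 / q - κ ≤ ∑ j, p i j)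
    (hcol : ∀ j : Fin q, 1 / q - κ ≤ ∑ i, p i j)
    (hz : 1 / q - κ ≤ ∑ i, ∑ j, if f i j = k then p i j else 0)
    (hk : ∀ i j : Fin q, (i : ℕ) + j = q - 1 → f i j ≠ k) :
    1 ≤ q ^ 3 * κ := by
  have hq : (1 : ℝ) ≤ q := by exact_mod_cast k.pos
  have hslack := sum_sum_ite_le_of_forall_diag_ne hpos hsupp hk
  have hxs := Fin.mul_triangle_le_sum_val_mul hrow
  have hys := Fin.mul_triangle_le_sum_val_mul hcol
  rw [hsum] at hslack
  have hmass : 1 / q - κ ≤ q * (q - 1) * κ := by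
    have : (1 / q : ℝ) * (q * (q - 1)) = q - 1 := by field_simp
    nlinarith
  calc (1 : ℝ) = q * (1 / q) := by field_simp
    _ ≤ q * (q * (q - 1) * κ + κ) := by gcongr; linarith
    _ = q ^ 3 * κ - q * (q - 1) * κ := by ring
    _ ≤ q ^ 3 * κ := by
      nlinarith [mul_nonneg (mul_nonneg (Nat.cast_nonneg q) (sub_nonneg.2 hq)) hκ.le]

end LowerTriangular

/-- If for every `κ > 0` there is a probability distribution on the triples
`(i, j, f(i,j))` with `i + j ≤ q − 1` whose marginal masses are all at least
`1/q − κ`, then the diagonal map `j ↦ f(q−1−j, j)` is surjective. -/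
theorem lower_triangular_diagonal_surjective (q : ℕ)
    (f : Fin q → Fin q → Fin q)
    (h : ∀ κ : ℝ, 0 < κ →
      ∃ p : Fin q → Fin q → ℝ,
        (∀ i j, 0 ≤ p i j) ∧
        (∀ i j : Fin q, q ≤ (i : ℕ) + (j : ℕ) → p i j = 0) ∧
        (∑ i, ∑ j, p i j = 1) ∧
        (∀ i : Fin q, 1 / q - κ ≤ ∑ j, p i j) ∧
        (∀ j : Fin q, 1 / q - κ ≤ ∑ i, p i j) ∧
        (∀ k : Fin q, 1 / q - κ ≤ ∑ i, ∑ j, if f i j = k then p i j else 0)) :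
    Function.Surjective (fun j : Fin q => f ⟨q - 1 - (j : ℕ), by omega⟩ j) := by
  intro k
  by_contra hk
  have hdiag : ∀ i j : Fin q, (i : ℕ) + j = q - 1 → f i j ≠ k := by
    rintro i j hij rfl
    exact hk ⟨j, congrArg (f · j) (Fin.ext (by simp only; omega))⟩
  have hq : (0 : ℝ) < q := by exact_mod_cast k.pos
  obtain ⟨p, hpos, hsupp, hsum, hrow, hcol, hz⟩ := h (1 / (2 * q ^ 3)) (by positivity)
  have hle := one_le_cube_mul_of_forall_diag_ne (by positivity) hpos hsupp hsum hrow hcol (hz k) hdiag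
  have hhalf : (q : ℝ) ^ 3 * (1 / (2 * q ^ 3)) = 1 / 2 := by field_simp
  linarith
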